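/- arXiv:2304.05025 — 3 statements merged into one kernel-verified Lean document; each statement's English description precedes it below -/
import Mathlib

section
/- In a separable Hadamard space, the Fréchet mean (barycenter) map is 1-Lipschitz with respect to the 1-Wasserstein distance: d(b(P), b(Q)) ≤ W₁(P,Q) for any two probability measures P, Q with finite first moment. -/
open MeasureTheory Set

class HadamardSpace (M : Type*) [MetricSpace M] : Prop where
  complete : CompleteSpace M
  npc : ∀ x y : M, ∃ m : M, ∀ z : M,
    dist z m ^ 2 ≤ dist z x ^ 2 / 2 + dist z y ^ 2 / 2 - dist x y ^ 2 / 4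

/-- The 1-Wasserstein distance, as the infimum of ∫ d dπ over couplings π. -/
noncomputable def W1 {M : Type*} [MetricSpace M] [MeasurableSpace M]
    (P Q : Measure M) : ℝ :=
  sInf { r : ℝ | ∃ π : Measure (M × M), IsProbabilityMeasure π ∧
    π.map Prod.fst = P ∧ π.map Prod.snd = Q ∧ r = ∫ p, dist p.1 p.2 ∂π }

/-!
Write `p = b P`, `q = b Q` and let `π` couple `P` and `Q`. Minimality of `p`, tested along iterated
midpoints towards `w`, gives the variance inequality `d(p, w)² ≤ ∫ (d(w, ·)² - d(p, ·)²) dP`; taking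
`w = q`, and symmetrically for `Q`, and adding along `π` yields
`2 d(p, q)² ≤ ∫ (d(q, x)² - d(p, x)² + d(p, y)² - d(q, y)²) dπ(x, y)`.
The quadruple inequality bounds the integrand by `2 d(p, q) d(x, y)`. It is obtained by cutting
the geodesics `[p, q]` and `[x, y]` into `n` and `m` equal pieces, summing over the grid of cells
the weak form with `d(p, q)² + d(x, y)²` on the right (a consequence of the midpoint inequality),
and letting `m / n` tend to `d(x, y) / d(p, q)`. The geodesic points are the barycenters of the
two-point laws `(1 - t) δ_x + t δ_y`, by the variance inequality.
-/

section GeodesicPoint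

variable {M : Type*} [MetricSpace M]

/-- The CAT(0) comparison inequality for the point at time `t` of a geodesic from `x` to `y`;
for `0 ≤ t ≤ 1` it forces `dist x m = t * dist x y` and `dist m y = (1 - t) * dist x y`. -/
def IsGeodesicPoint (x y : M) (t : ℝ) (m : M) : Prop :=
  ∀ u, dist u m ^ 2 ≤ (1 - t) * dist u x ^ 2 + t * dist u y ^ 2 - t * (1 - t) * dist x y ^ 2

def HasGeodesicPoints (M : Type*) [MetricSpace M] : Prop :=
  ∀ x y : M, ∃ γ : ℝ → M, ∀ t ∈ Icc (0 : ℝ) 1, IsGeodesicPoint x y t (γ t)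

lemma isGeodesicPoint_one (x y : M) : IsGeodesicPoint x y 1 y := fun u => by simp

lemma HadamardSpace.exists_isGeodesicPoint_half [HadamardSpace M] (x y : M) :
    ∃ m, IsGeodesicPoint x y (1 / 2) m := by
  obtain ⟨m, hm⟩ := HadamardSpace.npc x y
  exact ⟨m, fun u => by linarith [hm u]⟩

namespace IsGeodesicPoint

variable {x y m m' : M} {s t : ℝ}

lemma dist_left_le (h : IsGeodesicPoint x y t m) (ht : 0 ≤ t) : dist x m ≤ t * dist x y := by
  refine (pow_le_pow_iff_left₀ dist_nonneg (by positivity) two_ne_zero).1 ?_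
  have := h x
  rw [dist_self] at this
  nlinarith

lemma dist_right_le (h : IsGeodesicPoint x y t m) (ht : t ≤ 1) :
    dist m y ≤ (1 - t) * dist x y := by
  refine (pow_le_pow_iff_left₀ dist_nonneg (mul_nonneg (by linarith) dist_nonneg) two_ne_zero).1 ?_
  have := h y
  rw [dist_self, dist_comm y x, dist_comm y m] at this
  nlinarith

lemma dist_left_eq (h : IsGeodesicPoint x y t m) (ht₀ : 0 ≤ t) (ht₁ : t ≤ 1) :
    dist x m = t * dist x y := by
  linarith [h.dist_left_le ht₀, h.dist_right_le ht₁, dist_triangle x m y]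

lemma dist_le (hs : IsGeodesicPoint x y s m) (ht : IsGeodesicPoint x y t m') (hs₀ : 0 ≤ s)
    (hst : s ≤ t) (ht₁ : t ≤ 1) : dist m m' ≤ (t - s) * dist x y := by
  refine (pow_le_pow_iff_left₀ dist_nonneg (mul_nonneg (by linarith) dist_nonneg) two_ne_zero).1 ?_
  have hx := pow_le_pow_left₀ dist_nonneg (hs.dist_left_le hs₀) 2
  have hy := pow_le_pow_left₀ dist_nonneg (hs.dist_right_le (hst.trans ht₁)) 2
  rw [dist_comm] at hx
  nlinarith [ht m, mul_le_mul_of_nonneg_left hx (by linarith : 0 ≤ 1 - t),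
    mul_le_mul_of_nonneg_left hy (hs₀.trans hst)]

lemma trans (hm' : IsGeodesicPoint x m s m') (hm : IsGeodesicPoint x y t m) (hs₀ : 0 ≤ s)
    (ht₀ : 0 ≤ t) (ht₁ : t ≤ 1) : IsGeodesicPoint x y (s * t) m' := by
  intro u
  have hm'u := hm' u
  rw [hm.dist_left_eq ht₀ ht₁] at hm'u
  nlinarith [mul_le_mul_of_nonneg_left (hm u) hs₀]

end IsGeodesicPoint

lemma HadamardSpace.exists_isGeodesicPoint_half_pow [HadamardSpace M] (x y : M) (k : ℕ) :
    ∃ m, IsGeodesicPoint x y ((1 / 2) ^ k) m := by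
  induction k with
  | zero => exact ⟨y, by simpa using isGeodesicPoint_one x y⟩
  | succ k ih =>
    obtain ⟨m, hm⟩ := ih
    obtain ⟨m', hm'⟩ := exists_isGeodesicPoint_half x m
    refine ⟨m', ?_⟩
    rw [pow_succ', ← smul_eq_mul]
    exact hm'.trans hm (by norm_num) (by positivity)
      (pow_le_one₀ (by norm_num) (by norm_num))

end GeodesicPoint

section FrechetMean

variable {M : Type*} [MetricSpace M] [MeasurableSpace M]

/-- `z` minimizes the Fréchet function of `μ`, written with differences of squared distances so
that a finite first moment suffices for integrability. -/
def IsFrechetMean (μ : Measure M) (z : M) : Prop :=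
  ∀ x, 0 ≤ ∫ y, dist x y ^ 2 - dist z y ^ 2 ∂μ

variable [BorelSpace M] {μ : Measure M}

lemma integrable_dist_sq_sub_dist_sq (hμ : ∀ z, Integrable (fun y => dist z y) μ) (a c : M) :
    Integrable (fun y => dist a y ^ 2 - dist c y ^ 2) μ := by
  refine (((hμ a).add (hμ c)).const_mul (dist a c)).mono'
    (Continuous.aestronglyMeasurable (by fun_prop)) (.of_forall fun y => ?_)
  rw [Real.norm_eq_abs, sq_sub_sq, abs_mul, abs_of_nonneg (by positivity), mul_comm]
  exact mul_le_mul_of_nonneg_right (abs_dist_sub_le a c y) (by positivity)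

lemma IsFrechetMean.dist_sq_le [HadamardSpace M] [IsProbabilityMeasure μ]
    (hμ : ∀ z, Integrable (fun y => dist z y) μ) {z : M} (hz : IsFrechetMean μ z) (w : M) :
    dist z w ^ 2 ≤ ∫ y, dist w y ^ 2 - dist z y ^ 2 ∂μ := by
  have hG := integrable_dist_sq_sub_dist_sq hμ w z
  have approx : ∀ k : ℕ, (1 - (1 / 2 : ℝ) ^ k) * dist z w ^ 2 ≤
      ∫ y, dist w y ^ 2 - dist z y ^ 2 ∂μ := by
    intro k
    obtain ⟨m, hm⟩ := HadamardSpace.exists_isGeodesicPoint_half_pow z w k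
    set t : ℝ := (1 / 2) ^ k
    have ht : 0 < t := by positivity
    have hpoint : ∀ y, dist m y ^ 2 - dist z y ^ 2 ≤
        t * (dist w y ^ 2 - dist z y ^ 2) - t * (1 - t) * dist z w ^ 2 := fun y => by
      rw [dist_comm m, dist_comm z, dist_comm w]
      linarith [hm y]
    have hmono : ∫ y, dist m y ^ 2 - dist z y ^ 2 ∂μ ≤
        ∫ y, t * (dist w y ^ 2 - dist z y ^ 2) - t * (1 - t) * dist z w ^ 2 ∂μ :=
      integral_mono (integrable_dist_sq_sub_dist_sq hμ m z)
        ((hG.const_mul t).sub (integrable_const _)) hpoint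
    rw [integral_sub (hG.const_mul t) (integrable_const _), integral_const_mul, integral_const,
      probReal_univ, one_smul] at hmono
    nlinarith [hz m]
  have hlim : Filter.Tendsto (fun k : ℕ => (1 - (1 / 2 : ℝ) ^ k) * dist z w ^ 2) Filter.atTop
      (nhds (dist z w ^ 2)) := by
    simpa using ((tendsto_pow_atTop_nhds_zero_of_lt_one (r := (1 / 2 : ℝ)) (by norm_num)
      (by norm_num)).const_sub 1).mul_const (dist z w ^ 2)
  exact le_of_tendsto' hlim approx

end FrechetMean

section TwoPoint

variable {α : Type*} [MeasurableSpace α]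

noncomputable def twoPointMeasure (x y : α) (t : ℝ) : Measure α :=
  ENNReal.ofReal (1 - t) • Measure.dirac x + ENNReal.ofReal t • Measure.dirac y

variable {x y : α} {t : ℝ}

lemma isProbabilityMeasure_twoPointMeasure (ht₀ : 0 ≤ t) (ht₁ : t ≤ 1) :
    IsProbabilityMeasure (twoPointMeasure x y t) := by
  constructor
  simp [twoPointMeasure, ← ENNReal.ofReal_add (sub_nonneg.2 ht₁) ht₀]

variable [MeasurableSingletonClass α]

lemma integrable_twoPointMeasure (f : α → ℝ) : Integrable f (twoPointMeasure x y t) :=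
  ((integrable_dirac enorm_lt_top).smul_measure ENNReal.ofReal_ne_top).add_measure
    ((integrable_dirac enorm_lt_top).smul_measure ENNReal.ofReal_ne_top)

lemma integral_twoPointMeasure (ht₀ : 0 ≤ t) (ht₁ : t ≤ 1) (f : α → ℝ) :
    ∫ u, f u ∂twoPointMeasure x y t = (1 - t) * f x + t * f y := by
  rw [twoPointMeasure, integral_add_measure
    ((integrable_dirac enorm_lt_top).smul_measure ENNReal.ofReal_ne_top)
    ((integrable_dirac enorm_lt_top).smul_measure ENNReal.ofReal_ne_top),
    integral_smul_measure, integral_smul_measure, integral_dirac, integral_dirac,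
    ENNReal.toReal_ofReal (sub_nonneg.2 ht₁), ENNReal.toReal_ofReal ht₀, smul_eq_mul, smul_eq_mul]

end TwoPoint

lemma IsFrechetMean.isGeodesicPoint {M : Type*} [MetricSpace M] [HadamardSpace M]
    [MeasurableSpace M] [BorelSpace M] {x y z : M} {t : ℝ}
    (hz : IsFrechetMean (twoPointMeasure x y t) z) (ht₀ : 0 ≤ t) (ht₁ : t ≤ 1) :
    IsGeodesicPoint x y t z := by
  have := isProbabilityMeasure_twoPointMeasure (x := x) (y := y) ht₀ ht₁
  intro w
  have hvar := hz.dist_sq_le (fun _ => integrable_twoPointMeasure _) w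
  rw [integral_twoPointMeasure ht₀ ht₁, dist_comm z w] at hvar
  have hxy : dist x y ^ 2 ≤ (dist z x + dist z y) ^ 2 :=
    pow_le_pow_left₀ dist_nonneg (dist_triangle_left x y z) 2
  -- `(1 - t) a² + t b² - t (1 - t) (a + b)² = ((1 - t) a - t b)²`
  nlinarith [sq_nonneg ((1 - t) * dist z x - t * dist z y),
    mul_le_mul_of_nonneg_left hxy (mul_nonneg ht₀ (sub_nonneg.2 ht₁))]

lemma hasGeodesicPoints_of_isFrechetMean {M : Type*} [MetricSpace M] [HadamardSpace M]
    [MeasurableSpace M] [BorelSpace M] (b : Measure M → M)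
    (hb : ∀ μ : Measure M, IsProbabilityMeasure μ → (∀ z, Integrable (fun y => dist z y) μ) →
      IsFrechetMean μ (b μ)) :
    HasGeodesicPoints M := fun x y =>
  ⟨fun t => b (twoPointMeasure x y t), fun _ ht =>
    (hb _ (isProbabilityMeasure_twoPointMeasure ht.1 ht.2) fun _ =>
      integrable_twoPointMeasure _).isGeodesicPoint ht.1 ht.2⟩

section Quadruple

variable {M : Type*} [MetricSpace M]

lemma HadamardSpace.quadruple_le_sq_add_sq [HadamardSpace M] (p q y y' : M) :
    dist p y' ^ 2 + dist q y ^ 2 - dist p y ^ 2 - dist q y' ^ 2 ≤ dist p q ^ 2 + dist y y' ^ 2 := by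
  obtain ⟨m, hm⟩ := HadamardSpace.npc q y
  obtain ⟨m', hm'⟩ := HadamardSpace.npc p y'
  have hpy' := hm' m
  have hy' := hm y'
  rw [dist_comm m p, dist_comm m y'] at hpy'
  rw [dist_comm y' q, dist_comm y' y] at hy'
  linarith [hm p, sq_nonneg (dist m m')]

lemma HadamardSpace.quadruple_le_of_chains [HadamardSpace M] (c d : ℕ → M) {n m : ℕ} {A B : ℝ}
    (hc : ∀ i < n, dist (c i) (c (i + 1)) ≤ A) (hd : ∀ j < m, dist (d j) (d (j + 1)) ≤ B) :
    dist (c 0) (d m) ^ 2 + dist (c n) (d 0) ^ 2 - dist (c 0) (d 0) ^ 2 - dist (c n) (d m) ^ 2 ≤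
      n * m * (A ^ 2 + B ^ 2) := by
  set F : ℕ → ℕ → ℝ := fun i j => dist (c i) (d j) ^ 2
  have cell : ∀ i < n, ∀ j < m,
      F i (j + 1) + F (i + 1) j - F i j - F (i + 1) (j + 1) ≤ A ^ 2 + B ^ 2 := fun i hi j hj => by
    have := quadruple_le_sq_add_sq (c i) (c (i + 1)) (d j) (d (j + 1))
    linarith [pow_le_pow_left₀ dist_nonneg (hc i hi) 2, pow_le_pow_left₀ dist_nonneg (hd j hj) 2]
  have row : ∀ i, ∑ j ∈ Finset.range m, (F i (j + 1) + F (i + 1) j - F i j - F (i + 1) (j + 1)) =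
      (F i m - F i 0) - (F (i + 1) m - F (i + 1) 0) := fun i => by
    calc _ = ∑ j ∈ Finset.range m, ((F i (j + 1) - F (i + 1) (j + 1)) - (F i j - F (i + 1) j)) :=
          Finset.sum_congr rfl fun j _ => by ring
      _ = _ := by rw [Finset.sum_range_sub (fun j => F i j - F (i + 1) j)]; ring
  calc F 0 m + F n 0 - F 0 0 - F n m
      = ∑ i ∈ Finset.range n, ∑ j ∈ Finset.range m,
          (F i (j + 1) + F (i + 1) j - F i j - F (i + 1) (j + 1)) := by
        simp_rw [row, Finset.sum_range_sub' (fun i => F i m - F i 0)]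
        ring
    _ ≤ ∑ _i ∈ Finset.range n, ∑ _j ∈ Finset.range m, (A ^ 2 + B ^ 2) :=
        Finset.sum_le_sum fun i hi => Finset.sum_le_sum fun j hj =>
          cell i (Finset.mem_range.1 hi) j (Finset.mem_range.1 hj)
    _ = n * m * (A ^ 2 + B ^ 2) := by
        simp only [Finset.sum_const, Finset.card_range, nsmul_eq_mul]
        ring

lemma exists_chain_of_isGeodesicPoint {x y : M} {γ : ℝ → M}
    (hγ : ∀ t ∈ Icc (0 : ℝ) 1, IsGeodesicPoint x y t (γ t)) {n : ℕ} (hn : 0 < n) :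
    ∃ c : ℕ → M, c 0 = x ∧ c n = y ∧ ∀ i < n, dist (c i) (c (i + 1)) ≤ dist x y / n := by
  have hn' : (0 : ℝ) < n := Nat.cast_pos.2 hn
  have mem : ∀ i ≤ n, (i / n : ℝ) ∈ Icc (0 : ℝ) 1 := fun i hi =>
    ⟨by positivity, div_le_one_of_le₀ (Nat.cast_le.2 hi) hn'.le⟩
  refine ⟨fun i => γ (i / n), ?_, ?_, fun i hi => ?_⟩
  · have := (hγ 0 ⟨le_rfl, zero_le_one⟩).dist_left_le le_rfl
    simpa [eq_comm] using this
  · have := (hγ 1 ⟨zero_le_one, le_rfl⟩).dist_right_le le_rfl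
    simpa [hn'.ne'] using this
  · have := (hγ _ (mem i hi.le)).dist_le (hγ _ (mem (i + 1) hi)) (by positivity)
      (by gcongr; simp) (mem (i + 1) hi).2
    calc _ ≤ _ := this
      _ = dist x y / n := by push_cast; field_simp; ring

lemma le_two_mul_mul_of_forall_nat {a b C : ℝ} (ha : 0 < a) (hb : 0 ≤ b)
    (h : ∀ n m : ℕ, 0 < n → 0 < m → C ≤ m / n * a ^ 2 + n / m * b ^ 2) :
    C ≤ 2 * a * b := by
  refine le_of_forall_pos_le_add fun ε hε => ?_
  obtain ⟨q, hq_gt, hq_lt⟩ :=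
    exists_rat_btwn (lt_add_of_pos_right (b / a) (div_pos hε (pow_pos ha 2)))
  have hq : (0 : ℝ) < q := (div_nonneg hb ha.le).trans_lt hq_gt
  have hnum : 0 < q.num := Rat.num_pos.2 (by exact_mod_cast hq)
  have hcast : ((q.num.natAbs : ℕ) : ℝ) / q.den = q := by
    rw [Nat.cast_natAbs, Int.cast_abs, abs_of_pos (by exact_mod_cast hnum), Rat.cast_def]
  have key := h q.den q.num.natAbs q.den_pos (Int.natAbs_pos.2 hnum.ne')
  rw [hcast, ← inv_div, hcast] at key
  have h₁ : (q : ℝ) * a ^ 2 ≤ a * b + ε := calc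
    (q : ℝ) * a ^ 2 ≤ (b / a + ε / a ^ 2) * a ^ 2 := by gcongr
    _ = a * b + ε := by field_simp
  have h₂ : (q : ℝ)⁻¹ * b ^ 2 ≤ a * b := by
    rw [inv_mul_le_iff₀ hq]
    have := (div_lt_iff₀ ha).1 hq_gt
    nlinarith
  linarith

lemma quadruple_le_two_mul [HadamardSpace M]
    (hgeo : HasGeodesicPoints M) (p q y y' : M) :
    dist p y' ^ 2 + dist q y ^ 2 - dist p y ^ 2 - dist q y' ^ 2 ≤ 2 * dist p q * dist y y' := by
  rcases eq_or_ne p q with rfl | hpq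
  · simp
  refine le_two_mul_mul_of_forall_nat (dist_pos.2 hpq) dist_nonneg fun n m hn hm => ?_
  obtain ⟨γ, hγ⟩ := hgeo p q
  obtain ⟨δ, hδ⟩ := hgeo y y'
  obtain ⟨c, hc₀, hcn, hc⟩ := exists_chain_of_isGeodesicPoint hγ hn
  obtain ⟨d, hd₀, hdm, hd⟩ := exists_chain_of_isGeodesicPoint hδ hm
  calc _ ≤ n * m * ((dist p q / n) ^ 2 + (dist y y' / m) ^ 2) := by
        simpa only [hc₀, hcn, hd₀, hdm] using HadamardSpace.quadruple_le_of_chains c d hc hd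
    _ = m / n * dist p q ^ 2 + n / m * dist y y' ^ 2 := by
        field_simp

end Quadruple

section Coupling

variable {M : Type*} [MetricSpace M] [MeasurableSpace M] [BorelSpace M]

lemma dist_le_integral_dist_of_coupling [HadamardSpace M] [SecondCountableTopology M]
    (hgeo : HasGeodesicPoints M) {P Q : Measure M} [IsProbabilityMeasure P] [IsProbabilityMeasure Q]
    (hP : ∀ z, Integrable (fun y => dist z y) P) (hQ : ∀ z, Integrable (fun y => dist z y) Q)
    {p q : M} (hp : IsFrechetMean P p) (hq : IsFrechetMean Q q)
    {π : Measure (M × M)} (hπ₁ : π.map Prod.fst = P) (hπ₂ : π.map Prod.snd = Q) :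
    dist p q ≤ ∫ z, dist z.1 z.2 ∂π := by
  subst hπ₁ hπ₂
  have hvar₁ := hp.dist_sq_le hP q
  have hvar₂ := hq.dist_sq_le hQ p
  rw [integral_map measurable_fst.aemeasurable (Continuous.aestronglyMeasurable (by fun_prop))]
    at hvar₁
  rw [integral_map measurable_snd.aemeasurable (Continuous.aestronglyMeasurable (by fun_prop)),
    dist_comm q p] at hvar₂
  have hint₁ : Integrable (fun z : M × M => dist q z.1 ^ 2 - dist p z.1 ^ 2) π :=
    (integrable_dist_sq_sub_dist_sq hP q p).comp_measurable measurable_fst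
  have hint₂ : Integrable (fun z : M × M => dist p z.2 ^ 2 - dist q z.2 ^ 2) π :=
    (integrable_dist_sq_sub_dist_sq hQ p q).comp_measurable measurable_snd
  have hint_dist : Integrable (fun z : M × M => dist z.1 z.2) π :=
    (((hP p).comp_measurable measurable_fst).add ((hQ p).comp_measurable measurable_snd)).mono'
      continuous_dist.aestronglyMeasurable (.of_forall fun z => by
        rw [Real.norm_of_nonneg dist_nonneg]
        exact dist_triangle_left z.1 z.2 p)
  have key : 2 * dist p q ^ 2 ≤ 2 * dist p q * ∫ z, dist z.1 z.2 ∂π := calc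
    2 * dist p q ^ 2
        ≤ ∫ z, (dist q z.1 ^ 2 - dist p z.1 ^ 2) + (dist p z.2 ^ 2 - dist q z.2 ^ 2) ∂π := by
      rw [integral_add hint₁ hint₂]
      linarith
    _ ≤ ∫ z, 2 * dist p q * dist z.1 z.2 ∂π :=
      integral_mono (hint₁.add hint₂) (hint_dist.const_mul _) fun z => by
        linarith [quadruple_le_two_mul hgeo p q z.1 z.2]
    _ = 2 * dist p q * ∫ z, dist z.1 z.2 ∂π := integral_const_mul _ _
  rcases (dist_nonneg (x := p) (y := q)).eq_or_lt with h | h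
  · exact h ▸ integral_nonneg fun _ => dist_nonneg
  · nlinarith

end Coupling

/-- In a separable Hadamard space, the Fréchet mean (barycenter) map is
1-Lipschitz with respect to the 1-Wasserstein distance. -/
theorem barycenter_wasserstein_lipschitz
    {M : Type*} [MetricSpace M] [HadamardSpace M] [TopologicalSpace.SeparableSpace M]
    [MeasurableSpace M] [BorelSpace M]
    (b : Measure M → M)
    (hb : ∀ (R : Measure M), IsProbabilityMeasure R →
      (∀ z : M, Integrable (fun y => dist z y) R) →
      ∀ x : M, (1 / 2 : ℝ) * MeasureTheory.integral R (fun y => dist (b R) y ^ 2 - dist (b R) y ^ 2) ≤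
        (1 / 2 : ℝ) * MeasureTheory.integral R (fun y => dist x y ^ 2 - dist (b R) y ^ 2))
    (P Q : Measure M) [IsProbabilityMeasure P] [IsProbabilityMeasure Q]
    (hP : ∀ z : M, Integrable (fun y => dist z y) P)
    (hQ : ∀ z : M, Integrable (fun y => dist z y) Q) :
    dist (b P) (b Q) ≤ W1 P Q := by
  have hmean : ∀ μ : Measure M, IsProbabilityMeasure μ →
      (∀ z, Integrable (fun y => dist z y) μ) → IsFrechetMean μ (b μ) := fun μ hμ hint x => by
    simpa using hb μ hμ hint x
  have := UniformSpace.secondCountable_of_separable M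
  refine le_csInf ⟨_, P.prod Q, inferInstance, by simp, by simp, rfl⟩ ?_
  rintro _ ⟨π, -, hπ₁, hπ₂, rfl⟩
  exact dist_le_integral_dist_of_coupling (hasGeodesicPoints_of_isFrechetMean b hmean) hP hQ
    (hmean P ‹_› hP) (hmean Q ‹_› hQ) hπ₁ hπ₂
end

section
/- In a Hadamard space, for any point x and probability measure P with finite first moment, the directional derivative of the Fréchet function at x along a unit-speed geodesic γ with γ(0) = x and direction σ exists and equals −∫ cos(∠_x(σ, dir_x(z))) · d(x,z) dP(z), where the integrand vanishes at z = x by convention. -/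
open MeasureTheory Set Filter Real

/-- A unit speed geodesic on the interval [0, L]. -/
def IsUnitSpeedGeodesicOn {M : Type*} [MetricSpace M] (γ : ℝ → M) (L : ℝ) : Prop :=
  ∀ s ∈ Icc (0:ℝ) L, ∀ t ∈ Icc (0:ℝ) L, dist (γ s) (γ t) = |s - t|

/-- `A` is the Alexandrov angle at `γ 0 = γ' 0` between geodesics `γ` and `γ'`,
defined by the comparison limit. -/
def IsAlexandrovAngle {M : Type*} [MetricSpace M] (γ γ' : ℝ → M) (A : ℝ) : Prop :=
  Tendsto (fun p : ℝ × ℝ =>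
      Real.arccos ((p.1 ^ 2 + p.2 ^ 2 - dist (γ p.1) (γ' p.2) ^ 2) / (2 * p.1 * p.2)))
    ((nhdsWithin 0 (Ioi 0)) ×ˢ (nhdsWithin 0 (Ioi 0))) (nhds A)

open scoped Topology

/-!
Along `γ` the slope of the Fréchet function at `0` is
`∫ (d(γ t, y)² - d(x, y)²) / (2t) dP(y)`, whose integrand is dominated by `d(x, y) + L`; by
dominated convergence it suffices to have, for each `y ≠ x`, the first variation formula
`(d(γ t, y) - d(x, y)) / t → -cos ∠ₓ(γ, Γ y)`.
Writing `q(t, s)` for the cosine of the Euclidean comparison angle at `x` of the triangle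
`x, γ t, Γ y s`, the difference quotient lies between `-q(t, s)` and `-q(t, s) + t / s` when
`2t ≤ s`: the lower bound is the monotonicity of comparison angles in a CAT(0) space (the
function `u ↦ d(γ t, Γ y u)² - u²` is convex, being midpoint convex by the CAT(0) inequality
and continuous), the upper bound is the triangle inequality through `Γ y s`.
Taking `s = √t` and letting `t → 0`, `q(t, √t) → cos ∠ₓ(γ, Γ y)` by definition of the angle.
-/

/-- The cosine of the angle between the sides `a` and `b` of a Euclidean triangle whose third
side is `c`. -/
noncomputable def comparisonCos (a b c : ℝ) : ℝ := (a ^ 2 + b ^ 2 - c ^ 2) / (2 * a * b)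

lemma sq_eq_sub_comparisonCos {a b : ℝ} (ha : a ≠ 0) (hb : b ≠ 0) (c : ℝ) :
    c ^ 2 = a ^ 2 + b ^ 2 - 2 * a * b * comparisonCos a b c := by
  unfold comparisonCos
  field_simp
  ring

lemma comparisonCos_mem_Icc {a b c : ℝ} (ha : 0 < a) (hb : 0 < b) (hc₁ : |a - b| ≤ c)
    (hc₂ : c ≤ a + b) : comparisonCos a b c ∈ Icc (-1) 1 := by
  have hab : 0 < 2 * a * b := by positivity
  have hc : 0 ≤ c := (abs_nonneg _).trans hc₁
  obtain ⟨h₁, h₂⟩ := abs_le.1 hc₁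
  unfold comparisonCos
  rw [mem_Icc, le_div_iff₀ hab, div_le_iff₀ hab]
  constructor <;> nlinarith

lemma comparisonCos_dist_mem_Icc {M : Type*} [MetricSpace M] {p q r : M}
    (hq : 0 < dist p q) (hr : 0 < dist p r) :
    comparisonCos (dist p q) (dist p r) (dist q r) ∈ Icc (-1) 1 := by
  refine comparisonCos_mem_Icc hq hr ?_ (dist_triangle_left q r p)
  simpa only [dist_comm p] using abs_dist_sub_le q r p

lemma sub_mul_comparisonCos_le {a b c : ℝ} (ha : 0 < a) (hb : 0 < b) (hc : 0 ≤ c)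
    (hk : comparisonCos a b c ∈ Icc (-1) 1) : b - a * comparisonCos a b c ≤ c := by
  have hsq := sq_eq_sub_comparisonCos ha.ne' hb.ne' c
  obtain ⟨hk₁, hk₂⟩ := hk
  nlinarith [mul_nonneg (sub_nonneg.2 hk₂) (neg_le_iff_add_nonneg.1 hk₁)]

lemma le_sub_mul_comparisonCos_add {a b c : ℝ} (ha : 0 < a) (hab : 2 * a ≤ b) (hc : 0 ≤ c)
    (hk : comparisonCos a b c ∈ Icc (-1) 1) :
    c ≤ b - a * comparisonCos a b c + a ^ 2 / b := by
  have hb : 0 < b := by linarith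
  have hsq := sq_eq_sub_comparisonCos ha.ne' hb.ne' c
  set k := comparisonCos a b c
  set e := a ^ 2 / b
  have hbe : 2 * e * b = 2 * a ^ 2 := by rw [mul_assoc, div_mul_cancel₀ _ hb.ne']
  have he : 2 * e ≤ a := le_of_mul_le_mul_right (by nlinarith) hb
  have hr : 0 ≤ b - a * k + e := by nlinarith [div_nonneg (sq_nonneg a) hb.le, hk.2]
  refine (pow_le_pow_iff_left₀ hc hr two_ne_zero).1 ?_
  nlinarith [sq_nonneg (a * k - e)]

lemma nonpos_of_midpoint_le {K : ℝ → ℝ} {a b : ℝ} (hK : ContinuousOn K (Icc a b))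
    (hmid : ∀ x ∈ Icc a b, ∀ y ∈ Icc a b, K ((x + y) / 2) ≤ (K x + K y) / 2)
    (ha : K a ≤ 0) (hb : K b ≤ 0) : ∀ s ∈ Icc a b, K s ≤ 0 := by
  by_contra! ⟨s, hs, hKs⟩
  obtain ⟨u, hu, hmax⟩ := isCompact_Icc.exists_isMaxOn ⟨s, hs⟩ hK
  set T := Icc a b ∩ K ⁻¹' {K u}
  have hT : IsClosed T := hK.preimage_isClosed_of_isClosed isClosed_Icc isClosed_singleton
  have hTbdd : BddBelow T := ⟨a, fun v hv => hv.1.1⟩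
  -- the leftmost maximiser `c` is interior, and the midpoint inequality around it fails
  obtain ⟨⟨hac, hcb⟩, hKc⟩ : sInf T ∈ T := hT.csInf_mem ⟨u, hu, rfl⟩ hTbdd
  set c := sInf T
  replace hKc : K c = K u := hKc
  have hpos : 0 < K u := hKs.trans_le (hmax hs)
  replace hac : a < c := hac.lt_of_ne fun h => by rw [← h] at hKc; linarith
  replace hcb : c < b := hcb.lt_of_ne fun h => by rw [h] at hKc; linarith
  set δ := min (c - a) (b - c)
  have hδ : 0 < δ := lt_min (by linarith) (by linarith)
  have hl : c - δ ∈ Icc a b := ⟨by linarith [min_le_left (c - a) (b - c)], by linarith⟩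
  have hr : c + δ ∈ Icc a b := ⟨by linarith, by linarith [min_le_right (c - a) (b - c)]⟩
  have hKl : K (c - δ) < K u :=
    (hmax hl).lt_of_ne fun he => notMem_of_lt_csInf (by linarith) hTbdd ⟨hl, he⟩
  have hKr : K (c + δ) ≤ K u := hmax hr
  have hmidc := hmid _ hl _ hr
  rw [show (c - δ + (c + δ)) / 2 = c by ring, hKc] at hmidc
  linarith

lemma convexOn_Icc_of_midpoint_le {f : ℝ → ℝ} {a b : ℝ} (hf : ContinuousOn f (Icc a b))
    (hmid : ∀ x ∈ Icc a b, ∀ y ∈ Icc a b, f ((x + y) / 2) ≤ (f x + f y) / 2) :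
    ConvexOn ℝ (Icc a b) f := by
  refine LinearOrder.convexOn_of_lt (convex_Icc a b) fun x hx y hy hxy μ ν _ hν hμν => ?_
  obtain rfl : μ = 1 - ν := eq_sub_of_add_eq hμν
  have hyx : y - x ≠ 0 := (sub_pos.2 hxy).ne'
  have hsub : Icc x y ⊆ Icc a b := Icc_subset_Icc hx.1 hy.2
  set ℓ : ℝ → ℝ := fun u => f x + (u - x) / (y - x) * (f y - f x)
  have hℓ : ∀ u v, ℓ ((u + v) / 2) = (ℓ u + ℓ v) / 2 := fun u v => by simp only [ℓ]; ring
  have hK := nonpos_of_midpoint_le (K := f - ℓ) (a := x) (b := y)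
    ((hf.mono hsub).sub (by fun_prop))
    (fun u hu v hv => by simp only [Pi.sub_apply, hℓ]; linarith [hmid u (hsub hu) v (hsub hv)])
    (by simp [ℓ]) (by simp [ℓ, hyx]) ((1 - ν) * x + ν * y) ⟨by nlinarith, by nlinarith⟩
  have hν : ((1 - ν) * x + ν * y - x) / (y - x) = ν := by field_simp; ring
  simp only [Pi.sub_apply, ℓ, hν, sub_nonpos] at hK
  simp only [smul_eq_mul]
  linarith

namespace IsUnitSpeedGeodesicOn

variable {M : Type*} [MetricSpace M] {γ : ℝ → M} {L : ℝ}

lemma dist_zero_left (hγ : IsUnitSpeedGeodesicOn γ L) {t : ℝ} (ht : t ∈ Icc 0 L) :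
    dist (γ 0) (γ t) = t := by
  rw [hγ 0 ⟨le_rfl, ht.1.trans ht.2⟩ t ht, zero_sub, abs_neg, abs_of_nonneg ht.1]

lemma dist_zero_right (hγ : IsUnitSpeedGeodesicOn γ L) {t : ℝ} (ht : t ∈ Icc 0 L) :
    dist (γ t) (γ 0) = t := by
  rw [dist_comm, hγ.dist_zero_left ht]

lemma dist_right (hγ : IsUnitSpeedGeodesicOn γ L) {t : ℝ} (ht : t ∈ Icc 0 L) :
    dist (γ t) (γ L) = L - t := by
  rw [hγ t ht L ⟨ht.1.trans ht.2, le_rfl⟩, abs_sub_comm, abs_of_nonneg (sub_nonneg.2 ht.2)]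

lemma continuousOn (hγ : IsUnitSpeedGeodesicOn γ L) : ContinuousOn γ (Icc 0 L) :=
  (LipschitzOnWith.of_dist_le_mul fun s hs t ht => by
    rw [hγ s hs t ht, NNReal.coe_one, one_mul, Real.dist_eq]).continuousOn

lemma tendsto_nhdsGT (hγ : IsUnitSpeedGeodesicOn γ L) (hL : 0 < L) :
    Tendsto γ (𝓝[>] 0) (𝓝 (γ 0)) := by
  refine tendsto_iff_dist_tendsto_zero.2 (tendsto_nhdsWithin_of_tendsto_nhds tendsto_id
    |>.congr' ?_)
  filter_upwards [Ioo_mem_nhdsGT hL] with t ht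
  exact (hγ.dist_zero_right ⟨ht.1.le, ht.2.le⟩).symm

variable [HadamardSpace M]

lemma dist_sq_midpoint_le (hγ : IsUnitSpeedGeodesicOn γ L) (w : M) {a b : ℝ}
    (ha : a ∈ Icc 0 L) (hb : b ∈ Icc 0 L) :
    dist w (γ ((a + b) / 2)) ^ 2 ≤
      dist w (γ a) ^ 2 / 2 + dist w (γ b) ^ 2 / 2 - (a - b) ^ 2 / 4 := by
  obtain ⟨m, hm⟩ := HadamardSpace.npc (γ a) (γ b)
  have hmid : (a + b) / 2 ∈ Icc 0 L := ⟨by linarith [ha.1, hb.1], by linarith [ha.2, hb.2]⟩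
  have hab : dist (γ a) (γ b) ^ 2 = (a - b) ^ 2 := by rw [hγ a ha b hb, sq_abs]
  have hmida : dist (γ ((a + b) / 2)) (γ a) ^ 2 = (a - b) ^ 2 / 4 := by
    rw [hγ _ hmid a ha, sq_abs]; ring
  have hmidb : dist (γ ((a + b) / 2)) (γ b) ^ 2 = (a - b) ^ 2 / 4 := by
    rw [hγ _ hmid b hb, sq_abs]; ring
  -- the CAT(0) inequality at `z = γ ((a + b) / 2)` forces `γ ((a + b) / 2) = m`
  have hγm : γ ((a + b) / 2) = m := by
    have := hm (γ ((a + b) / 2))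
    rw [hmida, hmidb, hab] at this
    exact dist_eq_zero.1 ((sq_nonpos_iff _).1 (by linarith))
  simpa only [hγm, hab] using hm w

lemma convexOn_dist_sq_sub_sq (hγ : IsUnitSpeedGeodesicOn γ L) (w : M) :
    ConvexOn ℝ (Icc 0 L) fun u => dist w (γ u) ^ 2 - u ^ 2 := by
  refine convexOn_Icc_of_midpoint_le ?_ fun a ha b hb => ?_
  · exact ((continuous_const.dist continuous_id).comp_continuousOn hγ.continuousOn).pow 2
      |>.sub (continuous_pow 2).continuousOn
  · linarith [hγ.dist_sq_midpoint_le w ha hb]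

lemma comparisonCos_le (hγ : IsUnitSpeedGeodesicOn γ L) {w : M} (hw : 0 < dist (γ 0) w)
    {s s' : ℝ} (hs : 0 < s) (hss' : s ≤ s') (hs' : s' ≤ L) :
    comparisonCos (dist (γ 0) w) s' (dist w (γ s')) ≤
      comparisonCos (dist (γ 0) w) s (dist w (γ s)) := by
  have hs'0 : 0 < s' := hs.trans_le hss'
  have hconv := (hγ.convexOn_dist_sq_sub_sq w).2 ⟨le_rfl, hs'0.le.trans hs'⟩ ⟨hs'0.le, hs'⟩
    (sub_nonneg.2 <| (div_le_one hs'0).2 hss' : 0 ≤ 1 - s / s') (by positivity : 0 ≤ s / s')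
    (by ring)
  have hss : s / s' * s' = s := div_mul_cancel₀ _ hs'0.ne'
  have hpt : (1 - s / s') * 0 + s / s' * s' = s := by rw [mul_zero, zero_add, hss]
  simp only [smul_eq_mul, hpt, dist_comm w (γ 0)] at hconv
  rw [sq_eq_sub_comparisonCos hw.ne' hs.ne' (dist w (γ s)),
    sq_eq_sub_comparisonCos hw.ne' hs'0.ne' (dist w (γ s'))] at hconv
  refine le_of_mul_le_mul_left ?_ (by positivity : 0 < 2 * dist (γ 0) w * s)
  linear_combination
    hconv - 2 * dist (γ 0) w * comparisonCos (dist (γ 0) w) s' (dist w (γ s')) * hss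

end IsUnitSpeedGeodesicOn

section FirstVariation

variable {M : Type*} [MetricSpace M]

lemma IsAlexandrovAngle.tendsto_comparisonCos {γ γ' : ℝ → M} {L L' A : ℝ}
    (hA : IsAlexandrovAngle γ γ' A) (hL : 0 < L) (hL' : 0 < L') (hγ : IsUnitSpeedGeodesicOn γ L)
    (hγ' : IsUnitSpeedGeodesicOn γ' L') (h0 : γ' 0 = γ 0) :
    Tendsto (fun p : ℝ × ℝ => comparisonCos p.1 p.2 (dist (γ p.1) (γ' p.2)))
      (𝓝[>] 0 ×ˢ 𝓝[>] 0) (𝓝 (cos A)) := by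
  -- `IsAlexandrovAngle` is the limit of `arccos ∘ comparisonCos`, with `comparisonCos` unfolded
  refine ((continuous_cos.tendsto A).comp hA).congr' ?_
  filter_upwards [prod_mem_prod (Ioo_mem_nhdsGT hL) (Ioo_mem_nhdsGT hL')] with p ⟨hp₁, hp₂⟩
  have h₁ := hγ.dist_zero_left ⟨hp₁.1.le, hp₁.2.le⟩
  have h₂ := hγ'.dist_zero_left ⟨hp₂.1.le, hp₂.2.le⟩
  rw [h0] at h₂
  have hmem := comparisonCos_dist_mem_Icc (p := γ 0) (q := γ p.1) (r := γ' p.2)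
    (by rw [h₁]; exact hp₁.1) (by rw [h₂]; exact hp₂.1)
  rw [h₁, h₂] at hmem
  exact cos_arccos hmem.1 hmem.2

variable [HadamardSpace M]

theorem IsAlexandrovAngle.tendsto_dist_sub_div {γ Γ : ℝ → M} {L A : ℝ} {z : M}
    (hA : IsAlexandrovAngle γ Γ A) (hL : 0 < L) (hγ : IsUnitSpeedGeodesicOn γ L)
    (hΓ0 : Γ 0 = γ 0) (hΓz : Γ (dist (γ 0) z) = z) (hΓ : IsUnitSpeedGeodesicOn Γ (dist (γ 0) z))
    (hz : z ≠ γ 0) :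
    Tendsto (fun t => (dist (γ t) z - dist (γ 0) z) / t) (𝓝[>] 0) (𝓝 (-cos A)) := by
  set d := dist (γ 0) z
  have hd : 0 < d := dist_pos.2 hz.symm
  have hsqrt : Tendsto (fun t => (t, √t)) (𝓝[>] 0) (𝓝[>] 0 ×ˢ 𝓝[>] 0) := by
    refine tendsto_id.prodMk (tendsto_nhdsWithin_iff.2 ⟨?_, ?_⟩)
    · simpa using (continuous_sqrt.tendsto 0).mono_left nhdsWithin_le_nhds
    · filter_upwards [self_mem_nhdsWithin] with t ht using sqrt_pos.2 ht
  -- `s = √t` makes both `t, s → 0` and `t / s → 0`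
  set q : ℝ → ℝ := fun t => comparisonCos t √t (dist (γ t) (Γ √t))
  have hq : Tendsto q (𝓝[>] 0) (𝓝 (cos A)) :=
    ((hA.tendsto_comparisonCos hL hd hγ hΓ hΓ0).comp hsqrt :)
  have hbounds : ∀ᶠ t in 𝓝[>] 0,
      -q t ≤ (dist (γ t) z - d) / t ∧ (dist (γ t) z - d) / t ≤ -q t + √t := by
    filter_upwards [Ioo_mem_nhdsGT hL, Ioo_mem_nhdsGT (by norm_num : (0 : ℝ) < 1 / 4),
      Ioo_mem_nhdsGT (pow_pos hd 2)] with t ⟨ht, htL⟩ ⟨_, ht4⟩ ⟨_, htd⟩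
    set s := √t
    have hs : 0 < s := sqrt_pos.2 ht
    have hts : t = s ^ 2 := (sq_sqrt ht.le).symm
    have hsd : s ≤ d := by rw [hts] at htd; nlinarith
    have h2ts : 2 * t ≤ s := by rw [hts] at ht4 ⊢; nlinarith
    have hγt : dist (γ 0) (γ t) = t := hγ.dist_zero_left ⟨ht.le, htL.le⟩
    have hΓs : dist (γ 0) (Γ s) = s := hΓ0 ▸ hΓ.dist_zero_left ⟨hs.le, hsd⟩
    have hqt : q t ∈ Icc (-1) 1 := by
      have := comparisonCos_dist_mem_Icc (hγt.symm ▸ ht) (hΓs.symm ▸ hs)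
      rwa [hγt, hΓs] at this
    constructor
    · have hmono := hΓ.comparisonCos_le (w := γ t) (by rwa [hΓ0, hγt]) hs hsd le_rfl
      rw [hΓ0, hγt, hΓz] at hmono
      have hX : d - t * comparisonCos t d (dist (γ t) z) ≤ dist (γ t) z := by
        have := comparisonCos_dist_mem_Icc (r := z) (hγt.symm ▸ ht) hd
        rw [hγt] at this
        exact sub_mul_comparisonCos_le ht hd dist_nonneg this
      have hmono' : comparisonCos t d (dist (γ t) z) ≤ q t := hmono
      rw [le_div_iff₀ ht]
      nlinarith [mul_le_mul_of_nonneg_left hmono' ht.le]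
    · have hX : dist (γ t) z ≤ dist (γ t) (Γ s) + (d - s) := by
        have := dist_triangle (γ t) (Γ s) (Γ d)
        rwa [hΓ.dist_right ⟨hs.le, hsd⟩, hΓz] at this
      have hD : dist (γ t) (Γ s) ≤ s - t * q t + t ^ 2 / s :=
        le_sub_mul_comparisonCos_add ht h2ts dist_nonneg hqt
      have hts' : t ^ 2 / s = s * t := by rw [hts]; field_simp
      rw [div_le_iff₀ ht]
      linarith
  have hupper : Tendsto (fun t => -q t + √t) (𝓝[>] 0) (𝓝 (-cos A)) := by
    simpa using hq.neg.add ((continuous_sqrt.tendsto 0).mono_left nhdsWithin_le_nhds)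
  exact tendsto_of_tendsto_of_tendsto_of_le_of_le' hq.neg hupper
    (hbounds.mono fun _ h => h.1) (hbounds.mono fun _ h => h.2)

end FirstVariation

lemma abs_sq_dist_sub_sq_dist_le {M : Type*} [MetricSpace M] (a b y : M) :
    |dist a y ^ 2 - dist b y ^ 2| ≤ dist a b * (2 * dist b y + dist a b) := by
  have h₁ : |dist a y - dist b y| ≤ dist a b := abs_dist_sub_le a b y
  have h₂ : dist a y + dist b y ≤ 2 * dist b y + dist a b := by
    linarith [dist_triangle a b y]
  rw [show dist a y ^ 2 - dist b y ^ 2 = (dist a y - dist b y) * (dist a y + dist b y) by ring,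
    abs_mul, abs_of_nonneg (add_nonneg dist_nonneg dist_nonneg : 0 ≤ dist a y + dist b y)]
  exact mul_le_mul h₁ h₂ (by positivity) dist_nonneg

lemma integrable_sq_dist_sub_sq_dist {M : Type*} [MetricSpace M] [MeasurableSpace M]
    [BorelSpace M] {P : Measure M} [IsFiniteMeasure P] {x : M}
    (hP : Integrable (fun y => dist x y) P) (a b : M) :
    Integrable (fun y => dist a y ^ 2 - dist b y ^ 2) P := by
  refine ((hP.const_mul (2 * dist a b)).add
    (integrable_const (dist a b * (2 * dist b x + dist a b)))).mono'
    (by fun_prop : Continuous fun y => dist a y ^ 2 - dist b y ^ 2).aestronglyMeasurable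
    (ae_of_all _ fun y => ?_)
  rw [norm_eq_abs, Pi.add_apply]
  refine (abs_sq_dist_sub_sq_dist_le a b y).trans ?_
  nlinarith [mul_le_mul_of_nonneg_left (dist_triangle b x y) (dist_nonneg (x := a) (y := b))]

lemma tendsto_sq_dist_sub_sq_dist_div {M : Type*} [MetricSpace M] [HadamardSpace M]
    {γ Γ : ℝ → M} {L A : ℝ} {y : M} (hL : 0 < L) (hγ : IsUnitSpeedGeodesicOn γ L)
    (hΓ0 : Γ 0 = γ 0) (hΓy : Γ (dist (γ 0) y) = y) (hΓ : IsUnitSpeedGeodesicOn Γ (dist (γ 0) y))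
    (hA : y ≠ γ 0 → IsAlexandrovAngle γ Γ A) :
    Tendsto (fun t => (dist (γ t) y ^ 2 - dist (γ 0) y ^ 2) / (2 * t)) (𝓝[>] 0)
      (𝓝 (-(cos A * dist (γ 0) y))) := by
  rcases eq_or_ne y (γ 0) with rfl | hy
  · rw [dist_self, mul_zero, neg_zero]
    have h : Tendsto (fun t : ℝ => t / 2) (𝓝[>] 0) (𝓝 0) := by
      simpa using (continuous_id.div_const 2).tendsto' 0 0 (by simp) |>.mono_left
        nhdsWithin_le_nhds
    refine h.congr' ?_
    filter_upwards [Ioo_mem_nhdsGT hL] with t ht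
    rw [hγ.dist_zero_right ⟨ht.1.le, ht.2.le⟩]
    field_simp [ht.1.ne']
    ring
  · have hdist : Tendsto (fun t => dist (γ t) y) (𝓝[>] 0) (𝓝 (dist (γ 0) y)) :=
      (hγ.tendsto_nhdsGT hL).dist tendsto_const_nhds
    have hmean : Tendsto (fun t => (dist (γ t) y + dist (γ 0) y) / 2) (𝓝[>] 0)
        (𝓝 (dist (γ 0) y)) := by
      convert (hdist.add_const (dist (γ 0) y)).div_const 2 using 2
      ring
    rw [← neg_mul]
    refine (((hA hy).tendsto_dist_sub_div hL hγ hΓ0 hΓy hΓ hy).mul hmean).congr' ?_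
    filter_upwards [self_mem_nhdsWithin] with t ht
    field_simp [ht.out.ne']
    ring

/-- Directional derivative formula for the Fréchet function in a Hadamard space:
along a unit-speed geodesic γ with γ 0 = x in direction σ,
∇_σ F_P(x) = −∫ cos(∠_x(σ, dir_x z)) · d(x,z) dP(z) (the integrand vanishing at
z = x since d(x,x) = 0). -/
theorem frechet_directional_derivative
    {M : Type*} [MetricSpace M] [HadamardSpace M] [MeasurableSpace M] [BorelSpace M]
    (P : Measure M) [IsProbabilityMeasure P]
    (x : M) (hP : Integrable (fun y => dist x y) P)
    (L : ℝ) (hL : 0 < L) (γ : ℝ → M) (hγ0 : γ 0 = x) (hγ : IsUnitSpeedGeodesicOn γ L)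
    (Γ : M → ℝ → M)  -- Γ z is the unit-speed geodesic from x to z
    (hΓ0 : ∀ z : M, Γ z 0 = x) (hΓ1 : ∀ z : M, Γ z (dist x z) = z)
    (hΓ : ∀ z : M, IsUnitSpeedGeodesicOn (Γ z) (dist x z))
    (A : M → ℝ)  -- A z = ∠_x(σ, dir_x z)
    (hA : ∀ z : M, z ≠ x → IsAlexandrovAngle γ (Γ z) (A z))
    (z₀ : M) :
    HasDerivWithinAt
      (fun t => (1 / 2 : ℝ) * ∫ y, (dist (γ t) y ^ 2 - dist z₀ y ^ 2) ∂P)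
      (- ∫ z, Real.cos (A z) * dist x z ∂P) (Ici (0:ℝ)) 0 := by
  subst hγ0
  have hdom : ∀ᶠ t in 𝓝[>] 0, ∀ᵐ y ∂P,
      ‖(dist (γ t) y ^ 2 - dist (γ 0) y ^ 2) / (2 * t)‖ ≤ dist (γ 0) y + L := by
    filter_upwards [Ioo_mem_nhdsGT hL] with t ⟨ht, htL⟩
    refine ae_of_all _ fun y => ?_
    have h := abs_sq_dist_sub_sq_dist_le (γ t) (γ 0) y
    rw [hγ.dist_zero_right ⟨ht.le, htL.le⟩] at h
    rw [norm_div, norm_eq_abs, norm_of_nonneg (by positivity), div_le_iff₀ (by positivity)]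
    nlinarith
  have hlim := tendsto_integral_filter_of_dominated_convergence _
    (.of_forall fun t => (by fun_prop : Continuous fun y =>
      (dist (γ t) y ^ 2 - dist (γ 0) y ^ 2) / (2 * t)).aestronglyMeasurable)
    hdom (hP.add (integrable_const L)) (ae_of_all _ fun y =>
      tendsto_sq_dist_sub_sq_dist_div hL hγ (hΓ0 y) (hΓ1 y) (hΓ y) (hA y))
  rw [hasDerivWithinAt_iff_tendsto_slope, Ici_sdiff_left, ← integral_neg]
  refine hlim.congr' ?_
  filter_upwards [self_mem_nhdsWithin] with t ht
  rw [slope_def_field, ← mul_sub, ← integral_sub (integrable_sq_dist_sub_sq_dist hP _ _)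
    (integrable_sq_dist_sub_sq_dist hP _ _), integral_div]
  simp only [sub_sub_sub_cancel_right, sub_zero]
  ring
end

section
/- Let (X_i) be i.i.d. real-valued integrable random variables with E[X_1] = 0 and P(X_1 = 0) < 1, and let S_n = X_1 + ⋯ + X_n. Then almost surely liminf S_n = −∞ and limsup S_n = +∞; in particular, almost surely S_n < 0 for infinitely many n. -/
/-!
If the walk were bounded above with positive probability, then by Kolmogorov's 0-1 law it
would be bounded above almost surely. Its maximum `W = sup_n S_n ≥ 0` would then satisfy
`W = max 0 (X₀ + W')`, where `W'` is the maximum of the shifted walk `(X₁, X₂, …)`: it has the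
law of `W` and is independent of `X₀`. The difference `W - W' = max X₀ (-W')` is dominated by
`|X₀|` and has mean zero because `W` and `W'` have the same law; since it dominates `X₀`, which
has mean zero as well, it equals `X₀`, so `X₀ + W'` has the law of `W'`. Comparing essential
infima, this forces `X₀ ≥ 0`, hence `X₀ = 0` almost surely. Applied to `-X` this gives the
lower half.
-/

open MeasureTheory ProbabilityTheory Filter Set

section LawComparison

variable {Ω : Type*} [MeasurableSpace Ω] {μ : Measure Ω}

theorem ProbabilityTheory.IdentDistrib.integral_sub_eq_zero [IsFiniteMeasure μ] {U V : Ω → ℝ}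
    (h : IdentDistrib U V μ μ) (hUV : Integrable (U - V) μ) : ∫ ω, (U - V) ω ∂μ = 0 := by
  -- Bounded truncations of `U` and `V` have equal integrals; truncation is 1-Lipschitz, so
  -- dominated convergence with bound `|U - V|` passes to the limit.
  let clamp (k : ℕ) (x : ℝ) : ℝ := max (min x k) (-k)
  have hclamp_meas (k : ℕ) : Measurable (clamp k) := by fun_prop
  have hclamp_lip (k : ℕ) (x y : ℝ) : |clamp k x - clamp k y| ≤ |x - y| :=
    (abs_max_sub_max_le_abs _ _ _).trans <| (abs_min_sub_min_le_max _ _ _ _).trans (by simp)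
  have hclamp_int (k : ℕ) {f : Ω → ℝ} (hf : AEMeasurable f μ) :
      Integrable (fun ω => clamp k (f ω)) μ :=
    .of_bound ((hclamp_meas k).comp_aemeasurable hf).aestronglyMeasurable k <|
      ae_of_all _ fun ω => abs_le.2 ⟨le_max_right _ _, max_le (min_le_right _ _) (by simp)⟩
  have hclamp_eq (x : ℝ) : ∀ᶠ k : ℕ in atTop, clamp k x = x := by
    filter_upwards [eventually_ge_atTop ⌈|x|⌉₊] with k hk
    have := abs_le.1 (Nat.ceil_le.1 hk)
    change max (min x k) (-k) = x
    rw [min_eq_left (by linarith), max_eq_left (by linarith)]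
  have hsame (k : ℕ) : ∫ ω, clamp k (U ω) - clamp k (V ω) ∂μ = 0 := by
    rw [integral_sub (hclamp_int k h.aemeasurable_fst)
      (hclamp_int k h.aemeasurable_snd)]
    exact sub_eq_zero.2 (h.comp (hclamp_meas k)).integral_eq
  have hlim : Tendsto (fun k : ℕ => ∫ ω, clamp k (U ω) - clamp k (V ω) ∂μ) atTop
      (nhds (∫ ω, (U - V) ω ∂μ)) := by
    refine tendsto_integral_of_dominated_convergence (fun ω => |(U - V) ω|)
      (fun k => ((hclamp_int k h.aemeasurable_fst).sub
        (hclamp_int k h.aemeasurable_snd)).aestronglyMeasurable) hUV.abs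
      (fun k => ae_of_all _ fun ω => hclamp_lip k _ _) (ae_of_all _ fun ω => ?_)
    refine tendsto_const_nhds.congr' ?_
    filter_upwards [hclamp_eq (U ω), hclamp_eq (V ω)] with k hU hV
    rw [hU, hV, Pi.sub_apply]
  exact tendsto_nhds_unique hlim (by simp only [hsame, tendsto_const_nhds])

theorem ae_nonneg_of_identDistrib_add {X Y : Ω → ℝ} (hind : IndepFun X Y μ)
    (hY : ∃ c, ∀ᵐ ω ∂μ, c ≤ Y ω) (hid : IdentDistrib (X + Y) Y μ μ) : 0 ≤ᵐ[μ] X := by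
  rcases eq_zero_or_neZero μ with rfl | _
  · exact ae_zero.le (by simp)
  by_contra hneg
  obtain ⟨δ, hδ, hXδ⟩ : ∃ δ > (0 : ℝ), μ {ω | X ω ≤ -δ} ≠ 0 := by
    by_contra! h
    refine hneg (measure_mono_null (fun ω (hω : ¬ 0 ≤ X ω) => ?_)
      (measure_iUnion_null fun n : ℕ => h (1 / (n + 1)) (by positivity)))
    obtain ⟨n, hn⟩ := exists_nat_one_div_lt (neg_pos.2 (not_le.1 hω))
    exact mem_iUnion.2 ⟨n, show X ω ≤ _ by linarith⟩
  have hY_bdd : IsBoundedUnder (· ≥ ·) (ae μ) Y := by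
    obtain ⟨c, hc⟩ := hY
    exact ⟨c, hc⟩
  have hY_cobdd : IsCoboundedUnder (· ≥ ·) (ae μ) Y := by
    obtain ⟨a, ha⟩ : ∃ a : ℝ, ∃ᶠ ω in ae μ, Y ω ≤ a := by
      by_contra! h
      obtain ⟨ω, hω⟩ := (ae_all_iff.2 fun n : ℕ => h n).exists
      exact (hω ⌈Y ω⌉₊).not_ge (Nat.le_ceil _)
    exact .of_frequently_le ha
  -- `X ≤ -δ` and, independently, `Y < m + δ` with positive probability, which puts `X + Y`
  -- below `m = essInf Y = essInf (X + Y)`.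
  set m := essInf Y μ
  have hYm : μ {ω | Y ω < m + δ} ≠ 0 := by
    intro h0
    have : m + δ ≤ m :=
      le_essInf_of_ae_le _ (measure_mono_null (fun ω hω => by simpa using hω) h0) hY_cobdd
    linarith
  have hXY : μ {ω | X ω + Y ω < m} = 0 := by
    have := hid.measure_mem_eq (measurableSet_Iio (a := m))
    rw [preimage, preimage] at this
    simp only [Pi.add_apply, mem_Iio] at this
    rw [this]
    exact meas_lt_essInf hY_bdd
  refine mul_ne_zero hXδ hYm ?_
  change μ (X ⁻¹' Iic (-δ)) * μ (Y ⁻¹' Iio (m + δ)) = 0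
  rw [← hind.measure_inter_preimage_eq_mul _ _ measurableSet_Iic measurableSet_Iio]
  exact measure_mono_null (fun ω ⟨(h₁ : X ω ≤ -δ), (h₂ : Y ω < m + δ)⟩ =>
    show X ω + Y ω < m by linarith) hXY

theorem ae_eq_zero_of_identDistrib_max_zero_add [IsFiniteMeasure μ] {ξ V : Ω → ℝ}
    (hξ : Integrable ξ μ) (hmean : ∫ ω, ξ ω ∂μ = 0) (hV : 0 ≤ᵐ[μ] V)
    (hind : IndepFun ξ V μ) (hid : IdentDistrib (fun ω => max 0 (ξ ω + V ω)) V μ μ) :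
    ξ =ᵐ[μ] 0 := by
  set W := fun ω => max 0 (ξ ω + V ω)
  have hξ_le : ξ ≤ W - V := fun ω => by
    simp only [W, Pi.sub_apply]
    linarith [le_max_right 0 (ξ ω + V ω)]
  have hWV_int : Integrable (W - V) μ := by
    refine hξ.abs.mono'
      (hid.aemeasurable_fst.sub hid.aemeasurable_snd).aestronglyMeasurable ?_
    filter_upwards [hV] with ω hω
    rw [Real.norm_eq_abs, abs_le]
    refine ⟨(neg_abs_le _).trans (hξ_le ω), ?_⟩
    simp only [W, Pi.sub_apply, Pi.zero_apply] at hω ⊢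
    have : max 0 (ξ ω + V ω) ≤ |ξ ω| + V ω :=
      max_le (by linarith [abs_nonneg (ξ ω)]) (by linarith [le_abs_self (ξ ω)])
    linarith
  have hW_eq : W =ᵐ[μ] ξ + V := by
    have := (integral_eq_iff_of_ae_le hξ hWV_int (ae_of_all _ hξ_le)).1
      (by rw [hmean, hid.integral_sub_eq_zero hWV_int])
    filter_upwards [this] with ω hω
    simp only [Pi.sub_apply, Pi.add_apply] at hω ⊢
    linarith
  have hξV : IdentDistrib (ξ + V) V μ μ :=
    (IdentDistrib.of_ae_eq hid.aemeasurable_fst hW_eq).symm.trans hid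
  exact (integral_eq_zero_iff_of_nonneg_ae
    (ae_nonneg_of_identDistrib_add hind ⟨0, hV⟩ hξV) hξ).1 hmean

end LawComparison

theorem bddAbove_range_comp_add_iff {α : Type*} [Preorder α] [IsDirectedOrder α]
    (f : ℕ → α) (N : ℕ) :
    BddAbove (range fun n => f (n + N)) ↔ BddAbove (range f) := by
  have : Nonempty α := ⟨f 0⟩
  refine ⟨fun h => (((finite_Iio N).image f).bddAbove.union h).mono ?_,
    fun h => h.mono (range_comp_subset_range _ f)⟩
  rintro _ ⟨k, rfl⟩
  rcases lt_or_ge k N with hk | hk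
  · exact .inl ⟨k, hk, rfl⟩
  · exact .inr ⟨k - N, by simp [Nat.sub_add_cancel hk]⟩

theorem bddAbove_range_partialSums_shift_iff (x : ℕ → ℝ) (N : ℕ) :
    BddAbove (range fun n => ∑ i ∈ Finset.range n, x (i + N)) ↔
      BddAbove (range fun n => ∑ i ∈ Finset.range n, x i) := by
  have hsplit : (fun n => ∑ i ∈ Finset.range (n + N), x i) =
      OrderIso.addLeft (∑ i ∈ Finset.range N, x i) ∘
        fun n => ∑ i ∈ Finset.range n, x (i + N) := by
    ext n
    rw [add_comm n N, Finset.sum_range_add, Function.comp_apply, OrderIso.addLeft_apply]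
    simp only [add_comm N]
  rw [← OrderIso.bddAbove_image (OrderIso.addLeft (∑ i ∈ Finset.range N, x i)),
    ← range_comp, ← hsplit, bddAbove_range_comp_add_iff (fun n => ∑ i ∈ Finset.range n, x i)]

theorem iSup_partialSums_eq_max (x : ℕ → ℝ)
    (h : BddAbove (range fun n => ∑ i ∈ Finset.range n, x i)) :
    ⨆ n, ∑ i ∈ Finset.range n, x i =
      max 0 (x 0 + ⨆ n, ∑ i ∈ Finset.range n, x (i + 1)) := by
  have h₁ := (bddAbove_range_partialSums_shift_iff x 1).2 h
  refine le_antisymm (ciSup_le fun n => ?_) (max_le ?_ ?_)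
  · rcases n with _ | n
    · simp
    · rw [Finset.sum_range_succ']
      linarith [le_max_right 0 (x 0 + ⨆ n, ∑ i ∈ Finset.range n, x (i + 1)), le_ciSup h₁ n]
  · exact le_ciSup_of_le h 0 (by simp)
  · rw [← le_sub_iff_add_le']
    refine ciSup_le fun n => ?_
    have := le_ciSup h (n + 1)
    rw [Finset.sum_range_succ'] at this
    linarith

theorem frequently_lt_of_not_bddAbove_range {α : Type*} [LinearOrder α] {u : ℕ → α}
    (h : ¬BddAbove (range u)) (c : α) : ∃ᶠ n in atTop, c < u n := by
  by_contra! hc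
  exact h (IsBoundedUnder.bddAbove_range ⟨c, hc⟩)

theorem frequently_lt_of_not_bddBelow_range {α : Type*} [LinearOrder α] {u : ℕ → α}
    (h : ¬BddBelow (range u)) (c : α) : ∃ᶠ n in atTop, u n < c :=
  frequently_lt_of_not_bddAbove_range (α := αᵒᵈ) h c

section IndependentSequences

variable {Ω β : Type*} [MeasurableSpace Ω] [MeasurableSpace β] {μ : Measure Ω}
  {X : ℕ → Ω → β}

theorem ProbabilityTheory.iIndepFun.indepFun_head_tail (hmeas : ∀ i, Measurable (X i))
    (h : iIndepFun X μ) : IndepFun (X 0) (fun ω i => X (i + 1) ω) μ := by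
  have hindep := indep_iSup_of_disjoint (fun i => (hmeas i).comap_le) h.iIndep
    (S := {0}) (T := {i | 0 < i}) (by simp)
  rw [IndepFun_iff_Indep]
  refine indep_of_indep_of_le_right (indep_of_indep_of_le_left hindep
    (le_iSup₂ (f := fun i (_ : i ∈ ({0} : Set ℕ)) => MeasurableSpace.comap (X i) _) 0 rfl)) ?_
  exact measurable_iff_comap_le.1 <| @measurable_pi_lambda _ _ _ (_) _ _ fun i =>
    .of_comap_le <| le_iSup₂ (f := fun i (_ : i ∈ {i : ℕ | 0 < i}) =>
      MeasurableSpace.comap (X i) _) (i + 1) i.succ_pos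

theorem ProbabilityTheory.iIndepFun.identDistrib_reindex (hmeas : ∀ i, Measurable (X i))
    (h : iIndepFun X μ) (hident : ∀ i, IdentDistrib (X i) (X 0) μ μ) {g : ℕ → ℕ}
    (hg : g.Injective) : IdentDistrib (fun ω i => X (g i) ω) (fun ω i => X i ω) μ μ := by
  have := h.isProbabilityMeasure
  refine ⟨(measurable_pi_lambda _ fun i => hmeas (g i)).aemeasurable,
    (measurable_pi_lambda _ hmeas).aemeasurable, ?_⟩
  rw [(h.precomp hg).map_fun_eq_infinitePi_map (fun i => hmeas (g i)),
    h.map_fun_eq_infinitePi_map hmeas]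
  simp only [(hident _).map_eq]

end IndependentSequences

section RandomWalk

variable {Ω : Type*} [MeasurableSpace Ω] {μ : Measure Ω} {X : ℕ → Ω → ℝ}

theorem ProbabilityTheory.iIndepFun.measure_bddAbove_partialSums_eq_zero_or_one
    (hmeas : ∀ i, Measurable (X i)) (h : iIndepFun X μ) :
    μ {ω | BddAbove (range fun n => ∑ i ∈ Finset.range n, X i ω)} = 0 ∨
      μ {ω | BddAbove (range fun n => ∑ i ∈ Finset.range n, X i ω)} = 1 := by
  refine measure_zero_or_one_of_measurableSet_limsup_atTop (fun i => (hmeas i).comap_le)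
    h.iIndep ?_
  rw [limsup_eq_iInf_iSup_of_nat]
  refine MeasurableSpace.measurableSet_iInf.2 fun N => ?_
  have hshift : {ω | BddAbove (range fun n => ∑ i ∈ Finset.range n, X i ω)} =
      {ω | BddAbove (range fun n => ∑ i ∈ Finset.range n, X (i + N) ω)} :=
    ext fun ω => (bddAbove_range_partialSums_shift_iff (X · ω) N).symm
  rw [hshift]
  refine measurableSet_bddAbove_range fun n => Finset.measurable_sum _ fun i _ => ?_
  exact .of_comap_le (le_iSup₂ (f := fun j (_ : j ≥ N) => MeasurableSpace.comap (X j) _)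
    (i + N) (Nat.le_add_left N i))

theorem ae_not_bddAbove_partialSums (hmeas : ∀ i, Measurable (X i)) (hindep : iIndepFun X μ)
    (hident : ∀ i, IdentDistrib (X i) (X 0) μ μ) (hint : Integrable (X 0) μ)
    (hmean : ∫ ω, X 0 ω ∂μ = 0) (hne : μ {ω | X 0 ω = 0} < 1) :
    ∀ᵐ ω ∂μ, ¬BddAbove (range fun n => ∑ i ∈ Finset.range n, X i ω) := by
  have := hindep.isProbabilityMeasure
  rcases hindep.measure_bddAbove_partialSums_eq_zero_or_one hmeas with h | h
  · exact measure_eq_zero_iff_ae_notMem.1 h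
  have hbdd : ∀ᵐ ω ∂μ, BddAbove (range fun n => ∑ i ∈ Finset.range n, X i ω) :=
    (ae_iff_measure_eq (measurableSet_bddAbove_range fun n =>
      Finset.measurable_sum _ fun i _ => hmeas i).nullMeasurableSet).2 (by rw [h, measure_univ])
  -- `sup` takes the junk value `0` on sequences whose partial sums are unbounded.
  let sup (x : ℕ → ℝ) : ℝ := ⨆ n, ∑ i ∈ Finset.range n, x i
  have hsup : Measurable sup :=
    .iSup fun n => Finset.measurable_sum _ fun i _ => measurable_pi_apply i
  set V := fun ω => sup fun i => X (i + 1) ω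
  have hV : 0 ≤ᵐ[μ] V := by
    filter_upwards [hbdd] with ω hω
    exact le_ciSup_of_le ((bddAbove_range_partialSums_shift_iff _ 1).2 hω) 0 (by simp)
  have hW : (fun ω => sup (X · ω)) =ᵐ[μ] fun ω => max 0 (X 0 ω + V ω) := by
    filter_upwards [hbdd] with ω hω using iSup_partialSums_eq_max _ hω
  have hid : IdentDistrib (fun ω => max 0 (X 0 ω + V ω)) V μ μ :=
    (IdentDistrib.of_ae_eq (hsup.comp (measurable_pi_lambda _ hmeas)).aemeasurable
      hW).symm.trans
      ((hindep.identDistrib_reindex hmeas hident (add_left_injective 1)).symm.comp hsup)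
  have hX₀ := ae_eq_zero_of_identDistrib_max_zero_add hint hmean hV
    ((hindep.indepFun_head_tail hmeas).comp measurable_id hsup) hid
  exact (hne.ne (((ae_iff_measure_eq ((hmeas 0) (measurableSet_singleton 0)).nullMeasurableSet).1
    hX₀).trans measure_univ)).elim

theorem ae_not_bddBelow_partialSums (hmeas : ∀ i, Measurable (X i)) (hindep : iIndepFun X μ)
    (hident : ∀ i, IdentDistrib (X i) (X 0) μ μ) (hint : Integrable (X 0) μ)
    (hmean : ∫ ω, X 0 ω ∂μ = 0) (hne : μ {ω | X 0 ω = 0} < 1) :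
    ∀ᵐ ω ∂μ, ¬BddBelow (range fun n => ∑ i ∈ Finset.range n, X i ω) := by
  have hneg := ae_not_bddAbove_partialSums (X := fun i ω => -X i ω) (fun i => (hmeas i).neg)
    (hindep.comp _ fun _ => measurable_neg) (fun i => (hident i).comp measurable_neg) hint.neg
    (by rw [integral_neg, hmean, neg_zero]) (by simpa using hne)
  filter_upwards [hneg] with ω hω ⟨b, hb⟩
  refine hω ⟨-b, ?_⟩
  rintro _ ⟨n, rfl⟩
  simpa [Finset.sum_neg_distrib] using hb ⟨n, rfl⟩

end RandomWalk

theorem random_walk_oscillation_general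
    {Ω : Type*} [MeasureSpace Ω]
    (X : ℕ → Ω → ℝ)
    (hmeas : ∀ i, Measurable (X i))
    (hindep : iIndepFun X ℙ)
    (hident : ∀ i, IdentDistrib (X i) (X 0) ℙ ℙ)
    (hint : Integrable (X 0) ℙ)
    (hmean : ∫ ω, X 0 ω ∂ℙ = 0)
    (hne : ℙ {ω | X 0 ω = 0} < 1) :
    ∀ᵐ ω ∂ℙ,
      (∀ c : ℝ, ∃ᶠ n in atTop, (∑ i ∈ Finset.range n, X i ω) < c) ∧
      (∀ c : ℝ, ∃ᶠ n in atTop, c < ∑ i ∈ Finset.range n, X i ω) := by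
  filter_upwards [ae_not_bddBelow_partialSums hmeas hindep hident hint hmean hne,
    ae_not_bddAbove_partialSums hmeas hindep hident hint hmean hne] with ω hbelow habove
  exact ⟨frequently_lt_of_not_bddBelow_range hbelow, frequently_lt_of_not_bddAbove_range habove⟩

/-- Oscillation of mean-zero random walks: if (X_i) are i.i.d. integrable real
random variables with E[X_1] = 0 and P(X_1 = 0) < 1, then almost surely the
partial sums S_n satisfy liminf S_n = −∞ and limsup S_n = +∞; in particular
S_n < 0 infinitely often. -/
theorem random_walk_oscillation
    {Ω : Type*} [MeasureSpace Ω] [IsProbabilityMeasure (ℙ : Measure Ω)]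
    (X : ℕ → Ω → ℝ)
    (hmeas : ∀ i, Measurable (X i))
    (hindep : iIndepFun X ℙ)
    (hident : ∀ i, IdentDistrib (X i) (X 0) ℙ ℙ)
    (hint : Integrable (X 0) ℙ)
    (hmean : ∫ ω, X 0 ω ∂ℙ = 0)
    (hne : ℙ {ω | X 0 ω = 0} < 1) :
    ∀ᵐ ω ∂ℙ,
      (∀ c : ℝ, ∃ᶠ n in atTop, (∑ i ∈ Finset.range n, X i ω) < c) ∧
      (∀ c : ℝ, ∃ᶠ n in atTop, c < ∑ i ∈ Finset.range n, X i ω) :=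
  random_walk_oscillation_general X hmeas hindep hident hint hmean hne
end
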